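/- Let k ≥ 5 and let f be a distance-two coloring of a graph G using only colors from the set {1, 2, k-1, k}. Then f is a graceful coloring of G. -/

import Mathlib

open SimpleGraph

/-- A graceful coloring: proper, and differences at each vertex pairwise distinct. -/
def IsGraceful {V : Type*} (G : SimpleGraph V) (f : V → ℕ) : Prop :=
  (∀ ⦃u v⦄, G.Adj u v → f u ≠ f v) ∧
  ∀ ⦃v u w⦄, G.Adj v u → G.Adj v w → u ≠ w →
    ((f v : ℤ) - f u).natAbs ≠ ((f v : ℤ) - f w).natAbs

/-- A graceful `k`-coloring: graceful with colors in `{1,…,k}`. -/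
def IsGracefulK {V : Type*} (G : SimpleGraph V) (k : ℕ) (f : V → ℕ) : Prop :=
  IsGraceful G f ∧ ∀ v, f v ∈ Finset.Icc 1 k

/-- The graceful chromatic number. -/
noncomputable def gracefulChromatic {V : Type*} (G : SimpleGraph V) : ℕ :=
  sInf {k | ∃ f : V → ℕ, IsGracefulK G k f}

/-- The square of a graph: vertices adjacent iff at distance at most 2. -/
def squareGraph {V : Type*} (G : SimpleGraph V) : SimpleGraph V where
  Adj u v := u ≠ v ∧ (G.Adj u v ∨ ∃ w, G.Adj u w ∧ G.Adj w v)
  symm := ⟨by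
    rintro u v ⟨hne, h | ⟨w, h1, h2⟩⟩
    · exact ⟨hne.symm, Or.inl h.symm⟩
    · exact ⟨hne.symm, Or.inr ⟨w, h2.symm, h1.symm⟩⟩⟩
  loopless := ⟨by rintro u ⟨hne, -⟩; exact hne rfl⟩

/-- A set of naturals is AP-free: no three distinct elements `i, j, l` with `|i-j| = |j-l|`. -/
def APFree (S : Finset ℕ) : Prop :=
  ∀ i ∈ S, ∀ j ∈ S, ∀ l ∈ S, i ≠ j → j ≠ l → i ≠ l →
    ((i : ℤ) - j).natAbs ≠ ((j : ℤ) - l).natAbs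

/-- OEIS A065825: least `k` such that `{1,…,k}` contains an AP-free `n`-element subset. -/
noncomputable def A (n : ℕ) : ℕ :=
  sInf {k | ∃ S ⊆ Finset.Icc 1 k, S.card = n ∧ APFree S}

/-- Equal differences at `v` towards neighbours `u ≠ w` would make `f u, f v, f w` a
three-term progression, and its terms are pairwise distinct because `u`, `v`, `w` are pairwise
at distance at most two. -/
theorem isGraceful_of_apFree {V : Type*} {G : SimpleGraph V} {f : V → ℕ} {S : Finset ℕ}
    (hS : APFree S) (hrange : ∀ v, f v ∈ S)
    (hsq : ∀ ⦃u v⦄, (squareGraph G).Adj u v → f u ≠ f v) : IsGraceful G f := by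
  have hproper : ∀ ⦃u v⦄, G.Adj u v → f u ≠ f v := fun u v h =>
    hsq ⟨G.ne_of_adj h, Or.inl h⟩
  refine ⟨hproper, fun v u w hvu hvw huw hdiff => ?_⟩
  refine hS (f u) (hrange u) (f v) (hrange v) (f w) (hrange w) (hproper hvu).symm
    (hproper hvw) (hsq ⟨huw, Or.inr ⟨v, hvu.symm, hvw⟩⟩) ?_
  rwa [← Int.natAbs_neg, neg_sub]

theorem apFree_one_two_sub_one_self {k : ℕ} (hk : 5 ≤ k) : APFree {1, 2, k - 1, k} := by
  intro i hi j hj l hl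
  simp only [Finset.mem_insert, Finset.mem_singleton] at hi hj hl
  rcases hi with rfl | rfl | rfl | rfl <;> rcases hj with rfl | rfl | rfl | rfl <;>
    rcases hl with rfl | rfl | rfl | rfl <;> omega

theorem stmt13 {V : Type*} (G : SimpleGraph V) (k : ℕ) (hk : 5 ≤ k) (f : V → ℕ)
    (hrange : ∀ v, f v ∈ ({1, 2, k - 1, k} : Finset ℕ))
    (hd2 : ∀ u v : V, u ≠ v → (G.Adj u v ∨ ∃ w, G.Adj u w ∧ G.Adj w v) → f u ≠ f v) :
    IsGraceful G f :=
  isGraceful_of_apFree (apFree_one_two_sub_one_self hk) hrange fun u v h => hd2 u v h.1 h.2
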